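/- arXiv:1711.02140 — 2 statements merged into one kernel-verified Lean document; each statement's English description precedes it below -/
import Mathlib

section
/- Let b < 0, \sigma \ge 0, \delta > 0, 1 < \alpha < 2, let R(z) = (\sigma^2/2) z^2 + (\delta^{\alpha}/\alpha) z^{\alpha} + b z, let \theta_0 be the unique positive root of R, and define K(\lambda) = \lambda \exp\{\int_0^{\lambda} (b/R(z) - 1/z) dz\} for \lambda \in (0, \theta_0). Then K is strictly increasing on (0, \theta_0), K(\lambda) \to 0 as \lambda \downarrow 0, and K(\lambda) \to +\infty as \lambda \uparrow \theta_0. Hence K maps (0, \theta_0) bijectively onto (0, \infty). -/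
open MeasureTheory Real Set Filter

theorem stmt_13 (b σ δ α θ₀ : ℝ) (hb : b < 0) (hσ : 0 ≤ σ) (hδ : 0 < δ)
    (hα1 : 1 < α) (hα2 : α < 2) (R K : ℝ → ℝ)
    (hR : ∀ z, R z = σ ^ 2 / 2 * z ^ 2 + δ ^ α / α * z ^ α + b * z)
    (hθ : 0 < θ₀) (hroot : R θ₀ = 0) (hpos : ∀ z, θ₀ < z → 0 < R z)
    (hK : ∀ lam, K lam = lam * Real.exp (∫ z in Ioc (0:ℝ) lam, b / R z - 1 / z)) :
    StrictMonoOn K (Ioo 0 θ₀) ∧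
    Tendsto K (nhdsWithin 0 (Ioi 0)) (nhds 0) ∧
    Tendsto K (nhdsWithin θ₀ (Iio θ₀)) atTop ∧
    BijOn K (Ioo 0 θ₀) (Ioi 0) := by
  have hα0 : (0:ℝ) < α := by linarith
  have hb' : (0:ℝ) < -b := by linarith
  have hδα : 0 < δ ^ α := Real.rpow_pos_of_pos hδ α
  set f : ℝ → ℝ := fun z => b / R z - 1 / z with hf
  -- comparison lemma : R z / z strictly increasing
  have hRmono : ∀ z w : ℝ, 0 < z → z < w → R z * w < R w * z := by
    intro z w hz hzw
    have hw : 0 < w := hz.trans hzw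
    have hA : z ^ (α - 1) < w ^ (α - 1) :=
      Real.rpow_lt_rpow hz.le hzw (by linarith)
    have hzα : z ^ α = z ^ (α - 1) * z := by
      rw [← Real.rpow_add_one hz.ne' (α - 1), sub_add_cancel]
    have hwα : w ^ α = w ^ (α - 1) * w := by
      rw [← Real.rpow_add_one hw.ne' (α - 1), sub_add_cancel]
    have hda : 0 < δ ^ α / α := div_pos hδα hα0
    rw [hR z, hR w, hzα, hwα]
    nlinarith [mul_pos (mul_pos hz hw) (sub_pos.mpr hA),
      mul_pos (mul_pos hz hw) (sub_pos.mpr hzw),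
      mul_pos hda (mul_pos (mul_pos hz hw) (sub_pos.mpr hA)),
      mul_nonneg (by positivity : (0:ℝ) ≤ σ ^ 2 / 2)
        (mul_pos (mul_pos hz hw) (sub_pos.mpr hzw)).le]
  have hRmono' : ∀ z w : ℝ, 0 < z → z ≤ w → R z * w ≤ R w * z := by
    intro z w hz hzw
    rcases eq_or_lt_of_le hzw with rfl | h
    · ring_nf; exact le_rfl
    · exact (hRmono z w hz h).le
  have hRneg : ∀ z ∈ Ioo (0:ℝ) θ₀, R z < 0 := by
    intro z hz
    have h := hRmono z θ₀ hz.1 hz.2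
    rw [hroot, zero_mul] at h
    nlinarith
  -- derivative of R
  have hRderiv : ∀ z : ℝ, 0 < z →
      HasDerivAt R (σ ^ 2 * z + δ ^ α * z ^ (α - 1) + b) z := by
    intro z hz
    have hRfun : R = fun z => σ ^ 2 / 2 * z ^ 2 + δ ^ α / α * z ^ α + b * z :=
      funext hR
    have h1 : HasDerivAt (fun z : ℝ => σ ^ 2 / 2 * z ^ 2) (σ ^ 2 * z) z := by
      have := (hasDerivAt_pow 2 z).const_mul (σ ^ 2 / 2)
      refine this.congr_deriv ?_
      ring
    have h2 : HasDerivAt (fun z : ℝ => δ ^ α / α * z ^ α)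
        (δ ^ α * z ^ (α - 1)) z := by
      have := (Real.hasDerivAt_rpow_const (p := α) (Or.inl hz.ne')).const_mul
        (δ ^ α / α)
      refine this.congr_deriv ?_
      field_simp
    have h3 : HasDerivAt (fun z : ℝ => b * z) b z := by
      simpa using (hasDerivAt_id z).const_mul b
    rw [hRfun]
    exact (h1.add h2).add h3
  -- continuity of f on Ioo 0 θ₀
  have hfcontAt : ∀ z ∈ Ioo (0:ℝ) θ₀, ContinuousAt f z := by
    intro z hz
    have hRz := (hRneg z hz).ne
    exact (continuousAt_const.div (hRderiv z hz.1).continuousAt hRz).sub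
      (continuousAt_const.div continuousAt_id hz.1.ne')
  have hfcont : ContinuousOn f (Ioo 0 θ₀) :=
    fun z hz => (hfcontAt z hz).continuousWithinAt
  -- positivity of f
  have hfpos : ∀ z ∈ Ioo (0:ℝ) θ₀, 0 < f z := by
    intro z hz
    have hz0 := hz.1
    have hRz := hRneg z hz
    have hzα : 0 < z ^ α := Real.rpow_pos_of_pos hz0 α
    have hfz : f z = (b * z - R z) / (R z * z) := by
      simp only [hf]
      rw [div_sub_div _ _ hRz.ne hz0.ne', mul_one]
    rw [hfz]
    apply div_pos_of_neg_of_neg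
    · rw [hR z]
      have hda : 0 < δ ^ α / α := div_pos hδα hα0
      nlinarith [sq_nonneg (σ * z), mul_pos hda hzα]
    · exact mul_neg_of_neg_of_pos hRz hz0
  -- integrability
  have hInt : ∀ lam ∈ Ioo (0:ℝ) θ₀, IntegrableOn f (Ioc 0 lam) := by
    intro lam hlam
    have hlam0 := hlam.1
    have hc0 : 0 < -R lam / lam := div_pos (neg_pos.mpr (hRneg lam hlam)) hlam0
    set c := -R lam / lam with hc
    have hcne : c ≠ 0 := hc0.ne'
    set fB : ℝ → ℝ := fun z => σ ^ 2 / (2 * c) + δ ^ α / (α * c) * z ^ (α - 2)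
      with hfB
    have hBint : IntegrableOn fB (Ioc 0 lam) := by
      have h1 : IntervalIntegrable (fun z : ℝ => z ^ (α - 2)) volume 0 lam :=
        intervalIntegral.intervalIntegrable_rpow' (by linarith)
      have h2 := (intervalIntegrable_iff_integrableOn_Ioc_of_le hlam0.le).1 h1
      exact (integrableOn_const measure_Ioc_lt_top.ne).add
        (h2.const_mul _)
    have hsub : Ioc (0:ℝ) lam ⊆ Ioo 0 θ₀ := fun z hz =>
      ⟨hz.1, lt_of_le_of_lt hz.2 hlam.2⟩
    apply Integrable.mono' hBint
      ((hfcont.mono hsub).aestronglyMeasurable measurableSet_Ioc)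
    rw [ae_restrict_iff' measurableSet_Ioc]
    apply Eventually.of_forall
    intro z hz
    have hz0 : 0 < z := hz.1
    have hzθ := hsub hz
    have hRz := hRneg z hzθ
    rw [Real.norm_eq_abs, abs_of_pos (hfpos z hzθ)]
    have hfz : f z = (R z - b * z) / (-R z * z) := by
      simp only [hf]
      rw [div_sub_div _ _ hRz.ne hz0.ne', mul_one,
        show R z - b * z = -(b * z - R z) by ring,
        show -R z * z = -(R z * z) by ring, neg_div_neg_eq]
    have hden : c * z ^ 2 ≤ -R z * z := by
      rw [hc, div_mul_eq_mul_div, div_le_iff₀ hlam0]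
      nlinarith [mul_le_mul_of_nonneg_right (hRmono' z lam hz0 hz.2) hz0.le]
    have hNpos : 0 ≤ R z - b * z := by
      rw [hR z]
      nlinarith [mul_nonneg (div_pos hδα hα0).le
        (Real.rpow_pos_of_pos hz0 α).le, sq_nonneg (σ * z)]
    have hdpos : 0 < c * z ^ 2 := by positivity
    have hz2 : z ^ α = z ^ (α - 2) * z ^ (2:ℕ) := by
      rw [← Real.rpow_natCast z 2, ← Real.rpow_add hz0]
      norm_num
    calc f z = (R z - b * z) / (-R z * z) := hfz
      _ ≤ (R z - b * z) / (c * z ^ 2) := by gcongr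
      _ = fB z := by
          rw [hR z, hz2, hfB]
          have hzz : z ≠ 0 := hz0.ne'
          have hαz : α ≠ 0 := hα0.ne'
          field_simp
          ring
  have hIntI : ∀ lam ∈ Ioo (0:ℝ) θ₀, IntervalIntegrable f volume 0 lam :=
    fun lam hlam => (intervalIntegrable_iff_integrableOn_Ioc_of_le hlam.1.le).2
      (hInt lam hlam)
  set J : ℝ → ℝ := fun lam => ∫ z in (0:ℝ)..lam, f z with hJ
  have hJeq : ∀ lam : ℝ, 0 ≤ lam → J lam = ∫ z in Ioc (0:ℝ) lam, f z :=
    fun lam hlam => intervalIntegral.integral_of_le hlam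
  set L : ℝ → ℝ := fun lam => Real.log lam + J lam with hL
  have hLderiv : ∀ lam ∈ Ioo (0:ℝ) θ₀, HasDerivAt L (b / R lam) lam := by
    intro lam hlam
    have h1 : HasDerivAt J (f lam) lam :=
      intervalIntegral.integral_hasDerivAt_right (hIntI lam hlam)
        (ContinuousOn.stronglyMeasurableAtFilter isOpen_Ioo hfcont lam hlam)
        (hfcontAt lam hlam)
    have h2 := (Real.hasDerivAt_log hlam.1.ne').add h1
    refine h2.congr_deriv ?_
    have hR0 := (hRneg lam hlam).ne
    simp only [hf]
    field_simp
    ring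
  have hLcont : ContinuousOn L (Ioo 0 θ₀) :=
    fun x hx => ((hLderiv x hx).continuousAt).continuousWithinAt
  have hLmono : StrictMonoOn L (Ioo 0 θ₀) := by
    apply strictMonoOn_of_hasDerivWithinAt_pos (convex_Ioo 0 θ₀) hLcont
      (f' := fun lam => b / R lam)
    · intro x hx
      rw [interior_Ioo] at hx
      exact (hLderiv x hx).hasDerivWithinAt
    · intro x hx
      rw [interior_Ioo] at hx
      exact div_pos_of_neg_of_neg hb (hRneg x hx)
  have hKL : ∀ lam ∈ Ioo (0:ℝ) θ₀, K lam = Real.exp (L lam) := by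
    intro lam hlam
    rw [hK lam, hL]
    simp only [Real.exp_add, Real.exp_log hlam.1]
    rw [hJeq lam hlam.1.le]
  -- Part 1
  have part1 : StrictMonoOn K (Ioo 0 θ₀) := by
    intro x hx y hy hxy
    rw [hKL x hx, hKL y hy]
    exact Real.exp_lt_exp.2 (hLmono hx hy hxy)
  -- Part 2
  have part2 : Tendsto K (nhdsWithin 0 (Ioi 0)) (nhds 0) := by
    have hmem : θ₀ / 2 ∈ Ioo (0:ℝ) θ₀ := ⟨by linarith, by linarith⟩
    have hJle : ∀ lam, 0 < lam → lam ≤ θ₀ / 2 →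
        (∫ z in Ioc (0:ℝ) lam, f z) ≤ ∫ z in Ioc (0:ℝ) (θ₀/2), f z := by
      intro lam h0 h2
      apply setIntegral_mono_set (hInt (θ₀/2) hmem)
      · rw [EventuallyLE, ae_restrict_iff' measurableSet_Ioc]
        apply Eventually.of_forall
        intro z hz
        exact (hfpos z ⟨hz.1, lt_of_le_of_lt hz.2 hmem.2⟩).le
      · exact (Ioc_subset_Ioc_right h2).eventuallyLE
    apply squeeze_zero' (g := fun lam =>
      lam * Real.exp (∫ z in Ioc (0:ℝ) (θ₀/2), f z))
    · filter_upwards [Ioo_mem_nhdsGT_of_mem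
        (⟨le_rfl, hmem.1⟩ : (0:ℝ) ∈ Ico (0:ℝ) (θ₀/2))] with lam hlam
      rw [hK lam]
      exact (mul_pos hlam.1 (Real.exp_pos _)).le
    · filter_upwards [Ioo_mem_nhdsGT_of_mem
        (⟨le_rfl, hmem.1⟩ : (0:ℝ) ∈ Ico (0:ℝ) (θ₀/2))] with lam hlam
      rw [hK lam]
      exact mul_le_mul_of_nonneg_left
        (Real.exp_le_exp.2 (hJle lam hlam.1 hlam.2.le)) hlam.1.le
    · have hco : Continuous (fun lam : ℝ =>
          lam * Real.exp (∫ z in Ioc (0:ℝ) (θ₀/2), f z)) :=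
        continuous_id.mul continuous_const
      have h0 := hco.tendsto 0
      rw [zero_mul] at h0
      exact h0.mono_left nhdsWithin_le_nhds
  -- Part 3
  have part3 : Tendsto K (nhdsWithin θ₀ (Iio θ₀)) atTop := by
    set a := θ₀ / 2 with ha
    have hamem : a ∈ Ioo (0:ℝ) θ₀ := ⟨by rw [ha]; linarith, by rw [ha]; linarith⟩
    have ha0 : 0 < a := hamem.1
    set C := σ ^ 2 * θ₀ + δ ^ α * θ₀ ^ (α - 1) + -b with hC
    have hθα : 0 < θ₀ ^ (α - 1) := Real.rpow_pos_of_pos hθ _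
    have hC0 : 0 < C := by
      have h1 : 0 ≤ σ ^ 2 * θ₀ := by positivity
      have h2 : 0 < δ ^ α * θ₀ ^ (α - 1) := mul_pos hδα hθα
      rw [hC]; linarith
    have hRlip : ∀ z ∈ Icc a θ₀, -R z ≤ C * (θ₀ - z) := by
      intro z hz
      have hbound : ∀ x ∈ Icc a θ₀,
          ‖σ ^ 2 * x + δ ^ α * x ^ (α - 1) + b‖ ≤ C := by
        intro x hx
        have hx0 : 0 < x := lt_of_lt_of_le ha0 hx.1
        have h1 : 0 ≤ σ ^ 2 * x := by positivity
        have h2 : σ ^ 2 * x ≤ σ ^ 2 * θ₀ :=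
          mul_le_mul_of_nonneg_left hx.2 (sq_nonneg σ)
        have h3 : 0 ≤ δ ^ α * x ^ (α - 1) := by
          exact mul_nonneg hδα.le (Real.rpow_nonneg hx0.le _)
        have h4 : x ^ (α - 1) ≤ θ₀ ^ (α - 1) :=
          Real.rpow_le_rpow hx0.le hx.2 (by linarith)
        have h5 : δ ^ α * x ^ (α - 1) ≤ δ ^ α * θ₀ ^ (α - 1) :=
          mul_le_mul_of_nonneg_left h4 hδα.le
        rw [Real.norm_eq_abs, abs_le]
        constructor <;> [rw [hC]; rw [hC]] <;> linarith
      have key := Convex.norm_image_sub_le_of_norm_hasDerivWithin_le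
        (f := R) (f' := fun x => σ ^ 2 * x + δ ^ α * x ^ (α - 1) + b)
        (fun x hx => (hRderiv x (lt_of_lt_of_le ha0 hx.1)).hasDerivWithinAt)
        hbound (convex_Icc a θ₀) hz (right_mem_Icc.2 hamem.2.le)
      rw [hroot, zero_sub, norm_neg, Real.norm_eq_abs, Real.norm_eq_abs,
        abs_of_nonneg (sub_nonneg.2 hz.2)] at key
      calc -R z ≤ |R z| := neg_le_abs _
        _ ≤ C * (θ₀ - z) := key
    set φ : ℝ → ℝ := fun z => (-b) / C * (θ₀ - z)⁻¹ - 1 / a with hφ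
    have hφle : ∀ lam ∈ Ioo a θ₀, ∀ z ∈ Icc a lam, φ z ≤ f z := by
      intro lam hlam z hz
      have hz0 : 0 < z := lt_of_lt_of_le ha0 hz.1
      have hzθ : z < θ₀ := lt_of_le_of_lt hz.2 hlam.2
      have hRz := hRneg z ⟨hz0, hzθ⟩
      have h1 : b / R z = (-b) / (-R z) := (neg_div_neg_eq b (R z)).symm
      have h2 : (-b) / (C * (θ₀ - z)) ≤ (-b) / (-R z) := by
        gcongr
        · exact neg_pos.2 hRz
        · exact hRlip z ⟨hz.1, hzθ.le⟩
      have h3 : 1 / z ≤ 1 / a := one_div_le_one_div_of_le ha0 hz.1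
      have h4 : (-b) / C * (θ₀ - z)⁻¹ = (-b) / (C * (θ₀ - z)) := by
        rw [← div_eq_mul_inv, div_div]
      simp only [hφ, hf]
      rw [h1]
      linarith [h4 ▸ h2]
    have hstep : ∀ lam ∈ Ioo a θ₀,
        J a + ((-b) / C * (Real.log (θ₀ - a) - Real.log (θ₀ - lam)) -
          (1 / a) * (lam - a)) ≤ J lam := by
      intro lam hlam
      have halam : a ≤ lam := hlam.1.le
      have hIccsub : Icc a lam ⊆ Ioo 0 θ₀ := fun x hx =>
        ⟨lt_of_lt_of_le ha0 hx.1, lt_of_le_of_lt hx.2 hlam.2⟩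
      have hfab : IntervalIntegrable f volume a lam := by
        apply ContinuousOn.intervalIntegrable
        rw [uIcc_of_le halam]
        exact hfcont.mono hIccsub
      have hIinv : IntervalIntegrable (fun z : ℝ => (θ₀ - z)⁻¹) volume a lam := by
        apply ContinuousOn.intervalIntegrable
        rw [uIcc_of_le halam]
        exact ((continuous_const.sub continuous_id).continuousOn).inv₀
          fun z hz => (sub_pos.2 (lt_of_le_of_lt hz.2 hlam.2)).ne'
      have hφab : IntervalIntegrable φ volume a lam := by
        simp only [hφ]
        exact (hIinv.const_mul _).sub intervalIntegrable_const
      have hsplit : J a + ∫ z in a..lam, f z = J lam :=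
        intervalIntegral.integral_add_adjacent_intervals (hIntI a hamem) hfab
      have hmono := intervalIntegral.integral_mono_on halam hφab hfab
        (hφle lam hlam)
      have hFTC : ∫ z in a..lam, (θ₀ - z)⁻¹ =
          Real.log (θ₀ - a) - Real.log (θ₀ - lam) := by
        have hD : ∀ x ∈ uIcc a lam,
            HasDerivAt (fun z => -Real.log (θ₀ - z)) ((θ₀ - x)⁻¹) x := by
          intro x hx
          rw [uIcc_of_le halam] at hx
          have hxθ : θ₀ - x ≠ 0 := (sub_pos.2 (lt_of_le_of_lt hx.2 hlam.2)).ne'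
          have h1 : HasDerivAt (fun z : ℝ => θ₀ - z) (-1) x := by
            exact ((hasDerivAt_const x θ₀).sub (hasDerivAt_id x)).congr_deriv (by norm_num)
          have h2 := ((Real.hasDerivAt_log hxθ).comp x h1).neg
          refine h2.congr_deriv ?_
          field_simp
        rw [intervalIntegral.integral_eq_sub_of_hasDerivAt hD hIinv]
        ring
      have hcalc : ∫ z in a..lam, φ z =
          (-b) / C * (Real.log (θ₀ - a) - Real.log (θ₀ - lam)) -
            (1 / a) * (lam - a) := by
        simp only [hφ]
        rw [intervalIntegral.integral_sub (hIinv.const_mul _)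
          intervalIntegrable_const, intervalIntegral.integral_const_mul, hFTC,
          intervalIntegral.integral_const]
        simp [smul_eq_mul]
        ring
      rw [hcalc] at hmono
      linarith
    have hΦtop : Tendsto (fun lam => J a +
        ((-b) / C * (Real.log (θ₀ - a) - Real.log (θ₀ - lam)) -
          (1 / a) * (lam - a))) (nhdsWithin θ₀ (Iio θ₀)) atTop := by
      have h1 : Tendsto (fun lam : ℝ => θ₀ - lam) (nhdsWithin θ₀ (Iio θ₀))
          (nhdsWithin 0 (Ioi 0)) := by
        apply tendsto_nhdsWithin_of_tendsto_nhds_of_eventually_within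
        · have hco : Continuous (fun lam : ℝ => θ₀ - lam) :=
            continuous_const.sub continuous_id
          have h := hco.tendsto θ₀
          rw [sub_self] at h
          exact h.mono_left nhdsWithin_le_nhds
        · filter_upwards [self_mem_nhdsWithin] with x hx
          exact sub_pos.2 (mem_Iio.1 hx)
      have h2 : Tendsto (fun lam : ℝ => Real.log (θ₀ - lam))
          (nhdsWithin θ₀ (Iio θ₀)) atBot :=
        Real.tendsto_log_nhdsGT_zero.comp h1
      have h3 : Tendsto (fun lam : ℝ => Real.log (θ₀ - a) - Real.log (θ₀ - lam))
          (nhdsWithin θ₀ (Iio θ₀)) atTop :=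
        tendsto_atTop_add_const_left _ _ (tendsto_neg_atBot_atTop.comp h2)
      have h4 : Tendsto (fun lam : ℝ =>
          (-b) / C * (Real.log (θ₀ - a) - Real.log (θ₀ - lam)))
          (nhdsWithin θ₀ (Iio θ₀)) atTop := by
        apply Tendsto.const_mul_atTop (div_pos hb' hC0) h3
      have h5 : Tendsto (fun lam : ℝ => -((1 / a) * (lam - a)))
          (nhdsWithin θ₀ (Iio θ₀)) (nhds (-((1 / a) * (θ₀ - a)))) := by
        have hco : Continuous fun lam : ℝ => -((1 / a) * (lam - a)) :=
          (continuous_const.mul (continuous_sub_right a)).neg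
        exact (hco.tendsto θ₀).mono_left nhdsWithin_le_nhds
      have h6 := tendsto_atTop_add_right_of_le' _
        (-((1 / a) * (θ₀ - a)) - 1) h4
        (h5.eventually_const_le (by linarith))
      have h7 : Tendsto (fun lam : ℝ =>
          (-b) / C * (Real.log (θ₀ - a) - Real.log (θ₀ - lam)) -
            (1 / a) * (lam - a)) (nhdsWithin θ₀ (Iio θ₀)) atTop := by
        simpa [sub_eq_add_neg] using h6
      exact tendsto_atTop_add_const_left _ _ h7
    have hJtop : Tendsto J (nhdsWithin θ₀ (Iio θ₀)) atTop := by
      apply tendsto_atTop_mono' _ _ hΦtop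
      filter_upwards [Ioo_mem_nhdsLT_of_mem
        (⟨hamem.2, le_rfl⟩ : θ₀ ∈ Ioc a θ₀)] with lam hlam
      exact hstep lam hlam
    have hLtop : Tendsto L (nhdsWithin θ₀ (Iio θ₀)) atTop := by
      have hlog : Tendsto (fun lam : ℝ => Real.log lam)
          (nhdsWithin θ₀ (Iio θ₀)) (nhds (Real.log θ₀)) :=
        ((Real.continuousAt_log hθ.ne').tendsto).mono_left nhdsWithin_le_nhds
      exact tendsto_atTop_add_left_of_le' _ (Real.log θ₀ - 1)
        (hlog.eventually_const_le (by linarith)) hJtop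
    have hev : (fun lam => Real.exp (L lam)) =ᶠ[nhdsWithin θ₀ (Iio θ₀)] K := by
      filter_upwards [Ioo_mem_nhdsLT_of_mem
        (⟨hθ, le_rfl⟩ : θ₀ ∈ Ioc 0 θ₀)] with lam hlam
      exact (hKL lam hlam).symm
    exact Tendsto.congr' hev (Real.tendsto_exp_atTop.comp hLtop)
  refine ⟨part1, part2, part3, ?_, part1.injOn, ?_⟩
  · intro lam hlam
    rw [hK lam]
    exact mul_pos hlam.1 (Real.exp_pos _)
  · -- surjectivity
    intro y hy
    have hy0 : (0:ℝ) < y := hy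
    obtain ⟨lam₁, hlam₁, hKlam₁⟩ :
        ∃ lam, lam ∈ Ioo (0:ℝ) θ₀ ∧ K lam < y := by
      have e1 : ∀ᶠ lam in nhdsWithin (0:ℝ) (Ioi 0), K lam < y :=
        part2.eventually_lt_const hy0
      have e2 : ∀ᶠ lam in nhdsWithin (0:ℝ) (Ioi 0), lam ∈ Ioo (0:ℝ) θ₀ := by
        filter_upwards [Ioo_mem_nhdsGT_of_mem (by constructor <;> simp [hθ] : (0:ℝ) ∈ Ico (0:ℝ) θ₀)] with lam hlam
        exact hlam
      obtain ⟨lam, h1, h2⟩ := (e2.and e1).exists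
      exact ⟨lam, h1, h2⟩
    obtain ⟨lam₂, hlam₂, hKlam₂⟩ :
        ∃ lam, lam ∈ Ioo lam₁ θ₀ ∧ y < K lam := by
      have e1 : ∀ᶠ lam in nhdsWithin θ₀ (Iio θ₀), y < K lam :=
        part3.eventually_gt_atTop y
      have e2 : ∀ᶠ lam in nhdsWithin θ₀ (Iio θ₀), lam ∈ Ioo lam₁ θ₀ := by
        filter_upwards [Ioo_mem_nhdsLT_of_mem
          (⟨hlam₁.2, le_rfl⟩ : θ₀ ∈ Ioc lam₁ θ₀)] with lam hlam
        exact hlam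
      obtain ⟨lam, h1, h2⟩ := (e2.and e1).exists
      exact ⟨lam, h1, h2⟩
    have hsub : Icc lam₁ lam₂ ⊆ Ioo (0:ℝ) θ₀ := fun x hx =>
      ⟨lt_of_lt_of_le hlam₁.1 hx.1, lt_of_le_of_lt hx.2 hlam₂.2⟩
    have hKcont : ContinuousOn K (Icc lam₁ lam₂) := by
      apply ContinuousOn.congr
        ((Real.continuous_exp.comp_continuousOn (hLcont.mono hsub)))
      intro x hx
      exact hKL x (hsub hx)
    have := intermediate_value_Icc hlam₂.1.le hKcont
    obtain ⟨x, hx, hxy⟩ := this ⟨hKlam₁.le, hKlam₂.le⟩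
    exact ⟨x, hsub hx, hxy⟩
end

section
/- Let b < 0, \delta > 0, 1 < \alpha < 2, and let u < 0, t \ge 0. The function \psi : [0, \infty) \to (-\infty, 0) given by \psi(s) = -\big( ((-u e^{bt})^{1-\alpha} + \delta^{\alpha}/(b\alpha)) e^{b(\alpha-1)s} - \delta^{\alpha}/(b\alpha) \big)^{1/(1-\alpha)} satisfies the Bernoulli-type differential equation \psi'(s) = (\delta^{\alpha}/\alpha)(-\psi(s))^{\alpha} - b \psi(s) for all s \ge 0 with \psi(0) = u e^{bt}. Moreover, \lim_{t \to \infty} \psi(t) evaluated along s = t equals -\big((-u)^{1-\alpha} - \delta^{\alpha}/(b\alpha)\big)^{1/(1-\alpha)}. -/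
/-!
With `k = b(α-1)` and `p = 1/(1-α)`, the substitution `g = (-ψ)^(1-α)` turns the Bernoulli
equation `ψ' = b c (-ψ)^α - b ψ` into the linear equation `g' = k (g + c)`, whose solutions are
`g(s) = A e^{ks} - c`. The base `A e^{ks} - c` stays positive for `s ≥ 0` because `c ≤ 0` and
`k < 0`, and along the diagonal `s = t` the factor `e^{bt}` in the initial value cancels against
`e^{b(α-1)t}`, so the base tends to `(-u)^(1-α) - c`.
-/

open Real Filter Topology

noncomputable def bernoulliSol (b c α A s : ℝ) : ℝ :=
  -(A * exp (b * (α - 1) * s) - c) ^ (1 / (1 - α))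

theorem hasDerivAt_bernoulliSol {b c α A s : ℝ} (hα : α ≠ 1)
    (hpos : 0 < A * exp (b * (α - 1) * s) - c) :
    HasDerivAt (bernoulliSol b c α A)
      (b * c * (-bernoulliSol b c α A s) ^ α - b * bernoulliSol b c α A s) s := by
  set k := b * (α - 1)
  set p := 1 / (1 - α)
  set g := A * exp (k * s) - c
  have hα' : 1 - α ≠ 0 := sub_ne_zero.2 hα.symm
  have hkp : k * p = -b := by simp only [k, p]; field_simp; ring
  have hpα : p * α = p - 1 := by simp only [p]; field_simp; ring
  have hg : HasDerivAt (fun s => A * exp (k * s) - c) (A * (exp (k * s) * k)) s :=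
    (((hasDerivAt_id s).const_mul k).exp.const_mul A).sub_const c |>.congr_deriv (by simp)
  refine (hg.rpow_const (p := p) (Or.inl hpos.ne')).neg.congr_deriv ?_
  have hpow : (g ^ p) ^ α = g ^ (p - 1) := by rw [← rpow_mul hpos.le, hpα]
  have hsucc : g ^ (p - 1) * g = g ^ p := by
    rw [← rpow_add_one hpos.ne', sub_add_cancel]
  calc -(A * (exp (k * s) * k) * p * g ^ (p - 1))
      = -(A * exp (k * s) * (k * p) * g ^ (p - 1)) := by ring
    _ = b * c * g ^ (p - 1) + b * (g ^ (p - 1) * g) := by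
        rw [hkp, show A * exp (k * s) = g + c by ring]; ring
    _ = b * c * (-bernoulliSol b c α A s) ^ α - b * bernoulliSol b c α A s := by
        rw [show bernoulliSol b c α A s = -g ^ p from rfl, neg_neg, hpow, ← hsucc]; ring

theorem add_mul_exp_sub_pos {x c k s : ℝ} (hx : 0 < x) (hc : c ≤ 0) (hks : k * s ≤ 0) :
    0 < (x + c) * exp (k * s) - c := by
  have h₀ := exp_pos (k * s)
  have h₁ : exp (k * s) ≤ 1 := exp_le_one_iff.2 hks
  nlinarith

theorem bernoulliSol_zero {b c α x : ℝ} (hα : α ≠ 1) (hx : 0 ≤ x) :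
    bernoulliSol b c α (x ^ (1 - α) + c) 0 = -x := by
  rw [bernoulliSol, mul_zero, exp_zero, mul_one, add_sub_cancel_right, one_div,
    rpow_rpow_inv hx (sub_ne_zero.2 hα.symm)]

theorem tendsto_bernoulliSol_diag {b c α x : ℝ} (hx : 0 ≤ x) (hk : b * (α - 1) < 0)
    (hlim : x ^ (1 - α) - c ≠ 0) :
    Tendsto (fun t => bernoulliSol b c α ((x * exp (b * t)) ^ (1 - α) + c) t) atTop
      (𝓝 (-(x ^ (1 - α) - c) ^ (1 / (1 - α)))) := by
  have hcancel : ∀ t, ((x * exp (b * t)) ^ (1 - α) + c) * exp (b * (α - 1) * t) - c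
      = x ^ (1 - α) + c * exp (b * (α - 1) * t) - c := fun t => by
    rw [mul_rpow hx (exp_pos _).le, ← exp_mul, add_mul, mul_assoc, ← exp_add,
      show b * t * (1 - α) + b * (α - 1) * t = 0 by ring, exp_zero, mul_one]
  have hexp : Tendsto (fun t => exp (b * (α - 1) * t)) atTop (𝓝 0) :=
    tendsto_exp_comp_nhds_zero.2 ((tendsto_const_mul_atBot_of_neg hk).2 tendsto_id)
  have hbase : Tendsto (fun t => x ^ (1 - α) + c * exp (b * (α - 1) * t) - c) atTop
      (𝓝 (x ^ (1 - α) - c)) := by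
    simpa using ((hexp.const_mul c).const_add (x ^ (1 - α))).sub_const c
  simp only [bernoulliSol, hcancel]
  exact (hbase.rpow_const (Or.inl hlim)).neg

theorem stmt_16_general (b δ α u : ℝ) (hb : b < 0) (hδ : 0 < δ) (hα1 : 1 < α)
    (hu : u < 0) (Ψ : ℝ → ℝ → ℝ)
    (hΨ : ∀ t s, Ψ t s =
      -(((-(u * Real.exp (b * t))) ^ (1 - α) + δ ^ α / (b * α)) * Real.exp (b * (α - 1) * s)
          - δ ^ α / (b * α)) ^ (1 / (1 - α))) :
    (∀ t ≥ (0:ℝ), (∀ s ≥ (0:ℝ),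
        HasDerivAt (Ψ t) (δ ^ α / α * (-(Ψ t s)) ^ α - b * Ψ t s) s) ∧
      Ψ t 0 = u * Real.exp (b * t)) ∧
    Tendsto (fun t => Ψ t t) atTop
      (nhds (-((-u) ^ (1 - α) - δ ^ α / (b * α)) ^ (1 / (1 - α)))) := by
  set c := δ ^ α / (b * α)
  have hα : α ≠ 1 := hα1.ne'
  have hbα : b * α < 0 := mul_neg_of_neg_of_pos hb (by linarith)
  have hc : c ≤ 0 := div_nonpos_of_nonneg_of_nonpos (rpow_nonneg hδ.le α) hbα.le
  have hbc : b * c = δ ^ α / α := by simp only [c]; field_simp [hb.ne]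
  have hk : b * (α - 1) < 0 := mul_neg_of_neg_of_pos hb (by linarith)
  refine ⟨fun t _ => ?_, ?_⟩
  · set X := -(u * exp (b * t))
    have hX : 0 < X := neg_pos.2 (mul_neg_of_neg_of_pos hu (exp_pos _))
    have hΨt : Ψ t = bernoulliSol b c α (X ^ (1 - α) + c) := funext (hΨ t)
    refine ⟨fun s hs => ?_, ?_⟩
    · rw [hΨt, ← hbc]
      exact hasDerivAt_bernoulliSol hα
        (add_mul_exp_sub_pos (rpow_pos_of_pos hX _) hc (mul_nonpos_of_nonpos_of_nonneg hk.le hs))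
    · rw [hΨt, bernoulliSol_zero hα hX.le, neg_neg]
  · have hdiag : (fun t => Ψ t t)
        = fun t => bernoulliSol b c α (((-u) * exp (b * t)) ^ (1 - α) + c) t :=
      funext fun t => by rw [hΨ, neg_mul]; rfl
    rw [hdiag]
    exact tendsto_bernoulliSol_diag (neg_nonneg.2 hu.le) hk
      (by linarith [rpow_pos_of_pos (neg_pos.2 hu) (1 - α)])

theorem stmt_16 (b δ α u : ℝ) (hb : b < 0) (hδ : 0 < δ) (hα1 : 1 < α) (hα2 : α < 2)
    (hu : u < 0) (Ψ : ℝ → ℝ → ℝ)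
    (hΨ : ∀ t s, Ψ t s =
      -(((-(u * Real.exp (b * t))) ^ (1 - α) + δ ^ α / (b * α)) * Real.exp (b * (α - 1) * s)
          - δ ^ α / (b * α)) ^ (1 / (1 - α))) :
    (∀ t ≥ (0:ℝ), (∀ s ≥ (0:ℝ),
        HasDerivAt (Ψ t) (δ ^ α / α * (-(Ψ t s)) ^ α - b * Ψ t s) s) ∧
      Ψ t 0 = u * Real.exp (b * t)) ∧
    Tendsto (fun t => Ψ t t) atTop
      (nhds (-((-u) ^ (1 - α) - δ ^ α / (b * α)) ^ (1 / (1 - α)))) :=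
  stmt_16_general b δ α u hb hδ hα1 hu Ψ hΨ
end
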